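/- arXiv:0903.5269 — 2 statements merged into one kernel-verified Lean document; each statement's English description precedes it below -/
import Mathlib

section
/- For every R ∈ 𝔯(V), writing Ric := Ric(R), Ric* := Ric*(R), τ := τ(R): (1) Ric(α₁(R)) = (τ/n) g; (2) Ric(α₂(R)) = −(τ/n) g + (1/2) S(Ric + Ric*); (3) Ric(α₃(R)) = (1/2) S(Ric − Ric*); (4) Ric(α₄(R)) = (1/4) Λ(3Ric − Ric*); (5) Ric(α₅(R)) = (1/4) Λ(Ric + Ric*); (6) Ric(α_j(R)) = 0 for j = 6, 7, 8; (7) the g-trace of Ric(α_j(R)) vanishes for j = 2, …, 8. -/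
open scoped BigOperators
open Pointwise

namespace GCT

variable {V : Type*} [AddCommGroup V] [Module ℝ V]

/-- Linearity of a real valued function of one vector variable. -/
def IsLin (f : V → ℝ) : Prop :=
  (∀ x y : V, f (x + y) = f x + f y) ∧ (∀ (c : ℝ) (x : V), f (c • x) = c * f x)

/-- Bilinearity. -/
def IsBilin (h : V → V → ℝ) : Prop :=
  (∀ y, IsLin (fun x => h x y)) ∧ (∀ x, IsLin (fun y => h x y))

/-- 4-linearity. -/
def IsMulti4 (F : V → V → V → V → ℝ) : Prop :=
  (∀ y z w, IsLin (fun x => F x y z w)) ∧ (∀ x z w, IsLin (fun y => F x y z w)) ∧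
    (∀ x y w, IsLin (fun z => F x y z w)) ∧ (∀ x y z, IsLin (fun w => F x y z w))

/-- The space 𝔯(V) of generalized curvature tensors. -/
def rSet (V : Type*) [AddCommGroup V] [Module ℝ V] : Set (V → V → V → V → ℝ) :=
  {F | IsMulti4 F ∧ (∀ x y z w, F x y z w = - F y x z w) ∧
    (∀ x y z w, F x y z w + F y z x w + F z x y w = 0)}

/-- The space 𝔞(V) of algebraic curvature tensors. -/
def aSet (V : Type*) [AddCommGroup V] [Module ℝ V] : Set (V → V → V → V → ℝ) :=
  {F | F ∈ rSet V ∧ ∀ x y z w, F x y z w = - F x y w z}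

/-- The space 𝔰(V). -/
def sSet (V : Type*) [AddCommGroup V] [Module ℝ V] : Set (V → V → V → V → ℝ) :=
  {F | F ∈ rSet V ∧ ∀ x y z w, F x y z w = F x y w z}

/-- The conjugate tensor R*. -/
def conj (F : V → V → V → V → ℝ) : V → V → V → V → ℝ := fun x y z w => - F x y w z

/-- The product h·k of two bilinear forms. -/
def prodB (h k : V → V → ℝ) : V → V → V → V → ℝ := fun x y z w => h x y * k z w

/-- The wedge product h ∧_t k of two bilinear forms. -/
def wedge (t : ℝ) (h k : V → V → ℝ) : V → V → V → V → ℝ :=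
  fun x y z w => h x z * k y w - h y z * k x w - t * (h x w * k y z - h y w * k x z)

/-- Antisymmetric part Λh. -/
noncomputable def lamB (h : V → V → ℝ) : V → V → ℝ := fun x y => (h x y - h y x) / 2

/-- Symmetric part Sh. -/
noncomputable def symB (h : V → V → ℝ) : V → V → ℝ := fun x y => (h x y + h y x) / 2

/-- The idempotent ψ. -/
noncomputable def psi (F : V → V → V → V → ℝ) : V → V → V → V → ℝ :=
  fun x y z w => (F x y z w + F y x w z + F z w x y + F w z y x) / 4

/-- The idempotent μ. -/
noncomputable def mu (F : V → V → V → V → ℝ) : V → V → V → V → ℝ :=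
  fun x y z w =>
    (3 * F x y z w + 3 * F x y w z + F x w z y + F x z w y + F w y z x + F z y w x) / 8

/-- A linear equivalence is a g-isometry. -/
def IsIsometry (g : V → V → ℝ) (φ : V ≃ₗ[ℝ] V) : Prop := ∀ x y, g (φ x) (φ y) = g x y

/-- Pull back of a 4-tensor along a linear equivalence (the natural action). -/
def pullT (φ : V ≃ₗ[ℝ] V) (F : V → V → V → V → ℝ) : V → V → V → V → ℝ :=
  fun x y z w => F (φ x) (φ y) (φ z) (φ w)

/-- Invariance of a set of 4-tensors under the orthogonal group O(V,g). -/
def OInv (g : V → V → ℝ) (S : Set (V → V → V → V → ℝ)) : Prop :=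
  ∀ φ : V ≃ₗ[ℝ] V, IsIsometry g φ → ∀ F ∈ S, pullT φ F ∈ S

/-- Irreducibility of a subspace of 4-tensors as an O(V,g)-module:
there is no proper nonzero invariant subspace. -/
def OIrred (g : V → V → ℝ) (W : Set (V → V → V → V → ℝ)) : Prop :=
  ∀ U : Submodule ℝ (V → V → V → V → ℝ), (U : Set (V → V → V → V → ℝ)) ⊆ W →
    (∀ φ : V ≃ₗ[ℝ] V, IsIsometry g φ → ∀ F ∈ U, pullT φ F ∈ U) →
    (U : Set (V → V → V → V → ℝ)) = {0} ∨ (U : Set (V → V → V → V → ℝ)) = W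

/-- Isomorphism of two invariant subspaces as O(V,g)-modules. -/
def OEquivMod (g : V → V → ℝ) (S T : Set (V → V → V → V → ℝ)) : Prop :=
  ∃ e : (V → V → V → V → ℝ) →ₗ[ℝ] (V → V → V → V → ℝ),
    Set.BijOn e S T ∧
      ∀ φ : V ≃ₗ[ℝ] V, IsIsometry g φ → ∀ F ∈ S, e (pullT φ F) = pullT φ (e F)

variable (n : ℕ) (b : Module.Basis (Fin n) ℝ V) (g : V → V → ℝ)

/-- Inverse metric components g^{ij}. -/
noncomputable def ginv : Matrix (Fin n) (Fin n) ℝ :=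
  (Matrix.of fun i j => g (b i) (b j))⁻¹

/-- Ric(R)(x,y) := Σ g^{ij} R(e_i,x,y,e_j). -/
noncomputable def Ric (F : V → V → V → V → ℝ) : V → V → ℝ :=
  fun x y => ∑ i, ∑ j, ginv n b g i j * F (b i) x y (b j)

/-- Ric*(R)(x,y) := Σ g^{ij} R(x,e_i,e_j,y). -/
noncomputable def RicS (F : V → V → V → V → ℝ) : V → V → ℝ :=
  fun x y => ∑ i, ∑ j, ginv n b g i j * F x (b i) (b j) y

/-- The generalized scalar curvature τ(R). -/
noncomputable def tau (F : V → V → V → V → ℝ) : ℝ :=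
  ∑ i, ∑ j, ∑ k, ∑ l, ginv n b g i l * ginv n b g j k * F (b i) (b j) (b k) (b l)

/-- The g-trace of a bilinear form. -/
noncomputable def trg (h : V → V → ℝ) : ℝ := ∑ i, ∑ j, ginv n b g i j * h (b i) (b j)

/-- The scalar product on 4-tensors given by full contraction with g. -/
noncomputable def inner4 (F T : V → V → V → V → ℝ) : ℝ :=
  ∑ i, ∑ j, ∑ k, ∑ l, ∑ i', ∑ j', ∑ k', ∑ l',
    ginv n b g i i' * ginv n b g j j' * ginv n b g k k' * ginv n b g l l' *
      F (b i) (b j) (b k) (b l) * T (b i') (b j') (b k') (b l')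

/-- W-projection π₁. -/
noncomputable def pi1 (F : V → V → V → V → ℝ) : V → V → V → V → ℝ :=
  (-(tau n b g F) / ((n : ℝ) * ((n : ℝ) - 1))) • wedge 0 g g

/-- W-projection π₂. -/
noncomputable def pi2 (F : V → V → V → V → ℝ) : V → V → V → V → ℝ :=
  ((1 : ℝ) / ((n : ℝ) - 1)) • wedge 0 (((tau n b g F) / (n : ℝ)) • g - symB (Ric n b g F)) g

/-- W-projection π₃. -/
noncomputable def pi3 (F : V → V → V → V → ℝ) : V → V → V → V → ℝ :=
  ((-1 : ℝ) / ((n : ℝ) + 1)) •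
    ((2 : ℝ) • prodB (lamB (Ric n b g F)) g + wedge 0 (lamB (Ric n b g F)) g)

/-- W-projection π₄. -/
noncomputable def pi4 (F : V → V → V → V → ℝ) : V → V → V → V → ℝ :=
  ((-1 : ℝ) / ((n : ℝ) ^ 2 - 4)) •
      ((2 : ℝ) • prodB (lamB (RicS n b g F)) g + wedge ((n : ℝ) + 1) (lamB (RicS n b g F)) g)
    - ((3 : ℝ) / (((n : ℝ) ^ 2 - 4) * ((n : ℝ) + 1))) •
      ((2 : ℝ) • prodB (lamB (Ric n b g F)) g + wedge ((n : ℝ) + 1) (lamB (Ric n b g F)) g)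

/-- W-projection π₅. -/
noncomputable def pi5 (F : V → V → V → V → ℝ) : V → V → V → V → ℝ :=
  ((1 : ℝ) / (((n : ℝ) - 1) * ((n : ℝ) - 2))) •
    ((tau n b g F) • wedge 0 g g -
      ((1 : ℝ) / (n : ℝ)) •
        wedge ((n : ℝ) - 1) (symB (Ric n b g F + ((n : ℝ) - 1) • RicS n b g F)) g)

/-- W-projection π₆. -/
noncomputable def pi6 (F : V → V → V → V → ℝ) : V → V → V → V → ℝ :=
  psi F + ((1 : ℝ) / (2 * ((n : ℝ) - 2))) • wedge 1 (symB (Ric n b g F + RicS n b g F)) g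
    - ((tau n b g F) / (((n : ℝ) - 1) * ((n : ℝ) - 2))) • wedge 0 g g

/-- W-projection π₇. -/
noncomputable def pi7 (F : V → V → V → V → ℝ) : V → V → V → V → ℝ :=
  mu F + ((1 : ℝ) / (2 * (n : ℝ))) • wedge (-1) (symB (Ric n b g F - RicS n b g F)) g
    + ((1 : ℝ) / (2 * ((n : ℝ) + 2))) • prodB (lamB ((3 : ℝ) • Ric n b g F - RicS n b g F)) g
    + ((1 : ℝ) / (4 * ((n : ℝ) + 2))) • wedge (-1) (lamB ((3 : ℝ) • Ric n b g F - RicS n b g F)) g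

/-- W-projection π₈. -/
noncomputable def pi8 (F : V → V → V → V → ℝ) : V → V → V → V → ℝ :=
  F - psi F - mu F
    + ((1 : ℝ) / (2 * ((n : ℝ) - 2))) • prodB (lamB (Ric n b g F + RicS n b g F)) g
    + ((1 : ℝ) / (4 * ((n : ℝ) - 2))) • wedge 3 (lamB (Ric n b g F + RicS n b g F)) g

/-- A-projection α₁. -/
noncomputable def al1 (F : V → V → V → V → ℝ) : V → V → V → V → ℝ :=
  (-(tau n b g F) / ((n : ℝ) * ((n : ℝ) - 1))) • wedge 0 g g

/-- A-projection α₂. -/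
noncomputable def al2 (F : V → V → V → V → ℝ) : V → V → V → V → ℝ :=
  ((-1 : ℝ) / (2 * ((n : ℝ) - 2))) • wedge 1 (symB (Ric n b g F + RicS n b g F)) g
    + ((2 * tau n b g F) / ((n : ℝ) * ((n : ℝ) - 2))) • wedge 0 g g

/-- A-projection α₃. -/
noncomputable def al3 (F : V → V → V → V → ℝ) : V → V → V → V → ℝ :=
  ((-1 : ℝ) / (2 * (n : ℝ))) • wedge (-1) (symB (Ric n b g F - RicS n b g F)) g

/-- A-projection α₄. -/
noncomputable def al4 (F : V → V → V → V → ℝ) : V → V → V → V → ℝ :=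
  ((-1 : ℝ) / (4 * ((n : ℝ) + 2))) •
    ((2 : ℝ) • prodB (lamB ((3 : ℝ) • Ric n b g F - RicS n b g F)) g
      + wedge (-1) (lamB ((3 : ℝ) • Ric n b g F - RicS n b g F)) g)

/-- A-projection α₅. -/
noncomputable def al5 (F : V → V → V → V → ℝ) : V → V → V → V → ℝ :=
  ((-1 : ℝ) / (4 * ((n : ℝ) - 2))) •
    ((2 : ℝ) • prodB (lamB (Ric n b g F + RicS n b g F)) g
      + wedge 3 (lamB (Ric n b g F + RicS n b g F)) g)

/-- A-projection α₆. -/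
noncomputable def al6 (F : V → V → V → V → ℝ) : V → V → V → V → ℝ :=
  psi F - al1 n b g F - al2 n b g F

/-- A-projection α₇. -/
noncomputable def al7 (F : V → V → V → V → ℝ) : V → V → V → V → ℝ :=
  mu F - al3 n b g F - al4 n b g F

/-- A-projection α₈. -/
noncomputable def al8 (F : V → V → V → V → ℝ) : V → V → V → V → ℝ :=
  F - mu F - psi F - al5 n b g F

/-- Curvature tensors of constant curvature type. -/
noncomputable def uSet : Set (V → V → V → V → ℝ) :=
  {F | ∃ c : ℝ, ∀ x y z w, F x y z w = c * (g x w * g y z - g x z * g y w)}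

/-- Ricci traceless algebraic curvature tensors built from a traceless symmetric form. -/
noncomputable def zSet : Set (V → V → V → V → ℝ) :=
  {F | ∃ Xi : V → V → ℝ, IsBilin Xi ∧ (∀ x y, Xi x y = Xi y x) ∧ trg n b g Xi = 0 ∧
    ∀ x y z w, F x y z w = Xi x w * g y z + g x w * Xi y z - Xi x z * g y w - g x z * Xi y w}

/-- Weyl type (Ricci flat algebraic) curvature tensors. -/
noncomputable def wSet : Set (V → V → V → V → ℝ) :=
  {F | F ∈ aSet V ∧ Ric n b g F = fun _ _ => 0}

/-- The projective curvature tensor p(R). -/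
noncomputable def pProj (F : V → V → V → V → ℝ) : V → V → V → V → ℝ :=
  F - pi1 n b g F - pi2 n b g F - pi3 n b g F

/-! Ricci contraction is linear in the tensor, and every αⱼ(R) is a combination of R, ψ(R), μ(R)
and products h·g, h ∧ₜ g of bilinear forms with g. Contracting with g^{ij} gives
Ric(h·g) = hᵀ and Ric(h ∧ₜ g) = (1 + t − n) h − t tr(h) g, while antisymmetry, the Bianchi identity
and the symmetry of g^{ij} give Ric(ψR) = ½ S(Ric + Ric*) and
Ric(μR) = ½ S(Ric − Ric*) + ¼ Λ(3Ric − Ric*). Each formula is a linear combination of these, and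
the traces follow from tr Sh = tr h, tr Λh = 0, tr Ric = tr Ric* = τ and tr g = n. -/

-- `Ric`, `RicS` and `trg` are definitionally `contract` applied to component matrices.
noncomputable def contract : (Fin n → Fin n → ℝ) →ₗ[ℝ] ℝ where
  toFun f := ∑ i, ∑ j, ginv n b g i j * f i j
  map_add' f f' := by simp only [Pi.add_apply, mul_add, Finset.sum_add_distrib]
  map_smul' c f := by
    simp only [Pi.smul_apply, smul_eq_mul, RingHom.id_apply, Finset.mul_sum, mul_left_comm]

variable {n b g}

section Linearity

variable {f f' : V → ℝ}

theorem IsLin.add (hf : IsLin f) (hf' : IsLin f') : IsLin fun x => f x + f' x :=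
  ⟨fun x y => by simp only [hf.1, hf'.1]; ring, fun c x => by simp only [hf.2, hf'.2]; ring⟩

theorem IsLin.sub (hf : IsLin f) (hf' : IsLin f') : IsLin fun x => f x - f' x :=
  ⟨fun x y => by simp only [hf.1, hf'.1]; ring, fun c x => by simp only [hf.2, hf'.2]; ring⟩

theorem IsLin.const_mul (hf : IsLin f) (c : ℝ) : IsLin fun x => c * f x :=
  ⟨fun x y => by simp only [hf.1]; ring, fun c' x => by simp only [hf.2]; ring⟩

theorem IsLin.div_const (hf : IsLin f) (c : ℝ) : IsLin fun x => f x / c :=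
  ⟨fun x y => by simp only [hf.1]; ring, fun c' x => by simp only [hf.2]; ring⟩

theorem IsLin.sum {ι : Type*} [Fintype ι] {F : ι → V → ℝ} (hF : ∀ i, IsLin (F i)) :
    IsLin fun x => ∑ i, F i x :=
  ⟨fun x y => by rw [← Finset.sum_add_distrib]; exact Finset.sum_congr rfl fun i _ => (hF i).1 x y,
    fun c x => by rw [Finset.mul_sum]; exact Finset.sum_congr rfl fun i _ => (hF i).2 c x⟩

theorem IsLin.sum_repr_mul {ι : Type*} [Fintype ι] (hf : IsLin f) (e : Module.Basis ι ℝ V)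
    (x : V) : ∑ i, e.repr x i * f (e i) = f x := by
  let L : V →ₗ[ℝ] ℝ := ⟨⟨f, hf.1⟩, hf.2⟩
  calc ∑ i, e.repr x i * f (e i) = L (∑ i, e.repr x i • e i) := by rw [map_sum]; simp [L]
    _ = f x := by rw [e.sum_repr]; rfl

variable {h k : V → V → ℝ}

theorem IsBilin.add (hh : IsBilin h) (hk : IsBilin k) : IsBilin (h + k) :=
  ⟨fun y => (hh.1 y).add (hk.1 y), fun x => (hh.2 x).add (hk.2 x)⟩

theorem IsBilin.sub (hh : IsBilin h) (hk : IsBilin k) : IsBilin (h - k) :=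
  ⟨fun y => (hh.1 y).sub (hk.1 y), fun x => (hh.2 x).sub (hk.2 x)⟩

theorem IsBilin.smul (hh : IsBilin h) (c : ℝ) : IsBilin (c • h) :=
  ⟨fun y => (hh.1 y).const_mul c, fun x => (hh.2 x).const_mul c⟩

theorem IsBilin.symB (hh : IsBilin h) : IsBilin (symB h) :=
  ⟨fun y => ((hh.1 y).add (hh.2 y)).div_const 2, fun x => ((hh.2 x).add (hh.1 x)).div_const 2⟩

theorem IsBilin.lamB (hh : IsBilin h) : IsBilin (lamB h) :=
  ⟨fun y => ((hh.1 y).sub (hh.2 y)).div_const 2, fun x => ((hh.2 x).sub (hh.1 x)).div_const 2⟩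

end Linearity

theorem gram_det_ne_zero (hgb : IsBilin g) (hgnd : ∀ x : V, (∀ y : V, g x y = 0) → x = 0) :
    (Matrix.of fun i j => g (b i) (b j)).det ≠ 0 := by
  let B : V →ₗ[ℝ] V →ₗ[ℝ] ℝ := LinearMap.mk₂ ℝ g (fun x x' y => (hgb.1 y).1 x x')
    (fun c x y => (hgb.1 y).2 c x) (fun x y y' => (hgb.2 x).1 y y') (fun c x y => (hgb.2 x).2 c y)
  have hB : LinearMap.toMatrix₂ b b B = Matrix.of fun i j => g (b i) (b j) := by
    ext i j; simp [B, LinearMap.toMatrix₂_apply]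
  exact hB ▸ (LinearMap.separatingLeft_iff_det_ne_zero b).mp hgnd

theorem ginv_mul_gram (hgb : IsBilin g) (hgnd : ∀ x : V, (∀ y : V, g x y = 0) → x = 0) :
    ginv n b g * Matrix.of (fun i j => g (b i) (b j)) = 1 :=
  Matrix.nonsing_inv_mul _ (isUnit_iff_ne_zero.mpr (gram_det_ne_zero hgb hgnd))

theorem ginv_comm (hgs : ∀ x y, g x y = g y x) (i j : Fin n) : ginv n b g i j = ginv n b g j i :=
  (Matrix.IsSymm.inv (Matrix.IsSymm.ext fun i j => hgs (b j) (b i))).apply j i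

theorem sum_ginv_mul_eq_repr (hgb : IsBilin g) (hgnd : ∀ x : V, (∀ y : V, g x y = 0) → x = 0)
    (x : V) (i : Fin n) : ∑ j, ginv n b g i j * g (b j) x = b.repr x i := by
  set G : Matrix (Fin n) (Fin n) ℝ := Matrix.of fun i j => g (b i) (b j)
  have hgx : (fun j => g (b j) x) = G.mulVec (b.repr x) := by
    funext j
    simp only [G, Matrix.mulVec, dotProduct, Matrix.of_apply, mul_comm (g _ _)]
    exact ((hgb.2 (b j)).sum_repr_mul b x).symm
  calc ∑ j, ginv n b g i j * g (b j) x = (ginv n b g).mulVec (G.mulVec (b.repr x)) i := by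
        rw [← hgx]; rfl
    _ = b.repr x i := by rw [Matrix.mulVec_mulVec, ginv_mul_gram hgb hgnd, Matrix.one_mulVec]

theorem contract_apply (f : Fin n → Fin n → ℝ) :
    contract n b g f = ∑ i, ∑ j, ginv n b g i j * f i j := rfl

theorem contract_swap (hgs : ∀ x y, g x y = g y x) (f : Fin n → Fin n → ℝ) :
    contract n b g (fun i j => f j i) = contract n b g f := by
  rw [contract_apply, contract_apply, Finset.sum_comm]
  exact Finset.sum_congr rfl fun i _ => Finset.sum_congr rfl fun j _ => by rw [ginv_comm hgs]

theorem contract_gram (hgb : IsBilin g) (hgs : ∀ x y, g x y = g y x)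
    (hgnd : ∀ x : V, (∀ y : V, g x y = 0) → x = 0) :
    contract n b g (fun i j => g (b i) (b j)) = n := by
  rw [← contract_swap hgs, contract_apply]
  simp [sum_ginv_mul_eq_repr hgb hgnd]

theorem contract_mul_linear (hgb : IsBilin g) (hgs : ∀ x y, g x y = g y x)
    (hgnd : ∀ x : V, (∀ y : V, g x y = 0) → x = 0) {f : V → ℝ} (hf : IsLin f) (x : V) :
    contract n b g (fun i j => f (b i) * g x (b j)) = f x := by
  rw [contract_apply, ← hf.sum_repr_mul b x]
  refine Finset.sum_congr rfl fun i _ => ?_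
  rw [← sum_ginv_mul_eq_repr hgb hgnd, Finset.sum_mul]
  exact Finset.sum_congr rfl fun j _ => by rw [hgs]; ring

theorem Ric_add (F F' : V → V → V → V → ℝ) :
    Ric n b g (F + F') = Ric n b g F + Ric n b g F' :=
  funext fun x => funext fun y =>
    map_add (contract n b g) (fun i j => F (b i) x y (b j)) (fun i j => F' (b i) x y (b j))

theorem Ric_sub (F F' : V → V → V → V → ℝ) :
    Ric n b g (F - F') = Ric n b g F - Ric n b g F' :=
  funext fun x => funext fun y =>
    map_sub (contract n b g) (fun i j => F (b i) x y (b j)) (fun i j => F' (b i) x y (b j))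

theorem Ric_smul (c : ℝ) (F : V → V → V → V → ℝ) : Ric n b g (c • F) = c • Ric n b g F :=
  funext fun x => funext fun y => map_smul (contract n b g) c (fun i j => F (b i) x y (b j))

theorem trg_add (h k : V → V → ℝ) : trg n b g (h + k) = trg n b g h + trg n b g k :=
  map_add (contract n b g) (fun i j => h (b i) (b j)) (fun i j => k (b i) (b j))

theorem trg_sub (h k : V → V → ℝ) : trg n b g (h - k) = trg n b g h - trg n b g k :=
  map_sub (contract n b g) (fun i j => h (b i) (b j)) (fun i j => k (b i) (b j))

theorem trg_smul (c : ℝ) (h : V → V → ℝ) : trg n b g (c • h) = c * trg n b g h :=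
  map_smul (contract n b g) c (fun i j => h (b i) (b j))

theorem trg_zero : trg n b g 0 = 0 := map_zero (contract n b g)

theorem trg_self (hgb : IsBilin g) (hgs : ∀ x y, g x y = g y x)
    (hgnd : ∀ x : V, (∀ y : V, g x y = 0) → x = 0) : trg n b g g = n :=
  contract_gram hgb hgs hgnd

theorem trg_symB (hgs : ∀ x y, g x y = g y x) (h : V → V → ℝ) :
    trg n b g (symB h) = trg n b g h := by
  have hsplit : (fun i j => symB h (b i) (b j))
      = (1 / 2 : ℝ) • ((fun i j => h (b i) (b j)) + fun i j => h (b j) (b i)) := by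
    funext i j; simp only [symB, Pi.smul_apply, Pi.add_apply, smul_eq_mul]; ring
  change contract n b g _ = contract n b g _
  rw [hsplit, map_smul, map_add, contract_swap hgs (fun i j => h (b i) (b j))]
  simp only [smul_eq_mul]; ring

theorem trg_lamB (hgs : ∀ x y, g x y = g y x) (h : V → V → ℝ) : trg n b g (lamB h) = 0 := by
  have hsplit : (fun i j => lamB h (b i) (b j))
      = (1 / 2 : ℝ) • ((fun i j => h (b i) (b j)) - fun i j => h (b j) (b i)) := by
    funext i j; simp only [lamB, Pi.smul_apply, Pi.sub_apply, smul_eq_mul]; ring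
  change contract n b g _ = 0
  rw [hsplit, map_smul, map_sub, contract_swap hgs (fun i j => h (b i) (b j)), sub_self, smul_zero]

theorem trg_Ric (F : V → V → V → V → ℝ) : trg n b g (Ric n b g F) = tau n b g F := by
  simp only [trg, Ric, tau, Finset.mul_sum]
  rw [Finset.sum_congr rfl fun p _ => Finset.sum_comm, Finset.sum_comm]
  simp only [mul_assoc, mul_left_comm]

theorem trg_RicS (F : V → V → V → V → ℝ) : trg n b g (RicS n b g F) = tau n b g F := by
  simp only [trg, RicS, tau, Finset.mul_sum]
  refine Finset.sum_congr rfl fun p _ => ?_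
  rw [Finset.sum_comm]
  refine Finset.sum_congr rfl fun i _ => ?_
  rw [Finset.sum_comm]
  simp only [mul_assoc]

theorem IsMulti4.isBilin_Ric {F : V → V → V → V → ℝ} (hF : IsMulti4 F) :
    IsBilin (Ric n b g F) :=
  ⟨fun y => IsLin.sum fun i => IsLin.sum fun j => (hF.2.1 (b i) y (b j)).const_mul _,
    fun x => IsLin.sum fun i => IsLin.sum fun j => (hF.2.2.1 (b i) x (b j)).const_mul _⟩

theorem IsMulti4.isBilin_RicS {F : V → V → V → V → ℝ} (hF : IsMulti4 F) :
    IsBilin (RicS n b g F) :=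
  ⟨fun y => IsLin.sum fun i => IsLin.sum fun j => (hF.1 (b i) (b j) y).const_mul _,
    fun x => IsLin.sum fun i => IsLin.sum fun j => (hF.2.2.2 x (b i) (b j)).const_mul _⟩

theorem Ric_wedge (hgb : IsBilin g) (hgs : ∀ x y, g x y = g y x)
    (hgnd : ∀ x : V, (∀ y : V, g x y = 0) → x = 0) (t : ℝ) {h : V → V → ℝ} (hh : IsBilin h) :
    Ric n b g (wedge t h g) = (1 + t - n) • h - (t * trg n b g h) • g := by
  funext x y
  have hsplit : (fun i j => wedge t h g (b i) x y (b j))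
      = (fun i j => h (b i) y * g x (b j)) - h x y • (fun i j => g (b i) (b j))
        - (t * g x y) • (fun i j => h (b i) (b j)) + t • (fun i j => h x (b j) * g y (b i)) := by
    funext i j
    simp only [wedge, Pi.add_apply, Pi.sub_apply, Pi.smul_apply, smul_eq_mul, hgs (b i) y]
    ring
  change contract n b g _ = _
  rw [hsplit, map_add, map_sub, map_sub, map_smul, map_smul, map_smul,
    contract_swap hgs (fun i j => h x (b i) * g y (b j)),
    contract_mul_linear hgb hgs hgnd (hh.1 y), contract_mul_linear hgb hgs hgnd (hh.2 x),
    contract_gram hgb hgs hgnd]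
  simp only [Pi.sub_apply, Pi.smul_apply, smul_eq_mul, trg, contract_apply]
  ring

theorem Ric_prodB (hgb : IsBilin g) (hgs : ∀ x y, g x y = g y x)
    (hgnd : ∀ x : V, (∀ y : V, g x y = 0) → x = 0) {h : V → V → ℝ} (hh : IsBilin h) :
    Ric n b g (prodB h g) = fun x y => h y x :=
  funext fun x => funext fun y => contract_mul_linear hgb hgs hgnd (hh.1 x) y

theorem Ric_psi (hgs : ∀ x y, g x y = g y x) (F : V → V → V → V → ℝ) :
    Ric n b g (psi F) = (1 / 2 : ℝ) • symB (Ric n b g F + RicS n b g F) := by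
  funext x y
  have hsplit : (fun i j => psi F (b i) x y (b j))
      = (1 / 4 : ℝ) • ((fun i j => F (b i) x y (b j)) + (fun i j => F x (b i) (b j) y)
        + (fun i j => F y (b j) (b i) x) + fun i j => F (b j) y x (b i)) := by
    funext i j; simp only [psi, Pi.smul_apply, Pi.add_apply, smul_eq_mul]; ring
  change contract n b g _ = _
  rw [hsplit, map_smul, map_add, map_add, map_add,
    contract_swap hgs (fun i j => F y (b i) (b j) x),
    contract_swap hgs (fun i j => F (b i) y x (b j))]
  simp only [symB, Pi.smul_apply, Pi.add_apply, smul_eq_mul, Ric, RicS, contract_apply]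
  ring

section CurvatureContractions

variable {F : V → V → V → V → ℝ}

theorem contract₁₂_eq_zero (hgs : ∀ x y, g x y = g y x)
    (hA : ∀ x y z w, F x y z w = -F y x z w) (z w : V) :
    contract n b g (fun i j => F (b i) (b j) z w) = 0 := by
  have hswap := contract_swap (b := b) hgs (fun i j => F (b i) (b j) z w)
  have hneg : (fun i j => F (b j) (b i) z w) = -fun i j => F (b i) (b j) z w := by
    funext i j; simp only [Pi.neg_apply, hA (b j)]
  rw [hneg, map_neg] at hswap
  linarith

theorem contract₁₃_eq_neg_RicS (hgs : ∀ x y, g x y = g y x)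
    (hA : ∀ x y z w, F x y z w = -F y x z w)
    (hB : ∀ x y z w, F x y z w + F y z x w + F z x y w = 0) (x y : V) :
    contract n b g (fun i j => F (b i) x (b j) y) = -RicS n b g F x y := by
  have hsplit : (fun i j => F (b i) x (b j) y)
      = -(fun i j => F x (b j) (b i) y) - fun i j => F (b j) (b i) x y := by
    funext i j; simp only [Pi.sub_apply, Pi.neg_apply]; linarith [hB (b i) x (b j) y]
  rw [hsplit, map_sub, map_neg, contract_swap hgs (fun i j => F x (b i) (b j) y),
    contract_swap hgs (fun i j => F (b i) (b j) x y), contract₁₂_eq_zero hgs hA, sub_zero]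
  rfl

theorem contract₃₄_eq (hA : ∀ x y z w, F x y z w = -F y x z w)
    (hB : ∀ x y z w, F x y z w + F y z x w + F z x y w = 0) (x y : V) :
    contract n b g (fun i j => F y x (b i) (b j)) = Ric n b g F x y - Ric n b g F y x := by
  have hsplit : (fun i j => F y x (b i) (b j))
      = (fun i j => F (b i) x y (b j)) - fun i j => F (b i) y x (b j) := by
    funext i j; simp only [Pi.sub_apply]; linarith [hB y x (b i) (b j), hA x (b i) y (b j)]
  rw [hsplit, map_sub]
  rfl

theorem Ric_mu (hgs : ∀ x y, g x y = g y x) (hA : ∀ x y z w, F x y z w = -F y x z w)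
    (hB : ∀ x y z w, F x y z w + F y z x w + F z x y w = 0) :
    Ric n b g (mu F) = (1 / 2 : ℝ) • symB (Ric n b g F - RicS n b g F)
      + (1 / 4 : ℝ) • lamB ((3 : ℝ) • Ric n b g F - RicS n b g F) := by
  funext x y
  have hsplit : (fun i j => mu F (b i) x y (b j))
      = (1 / 8 : ℝ) • ((3 : ℝ) • (fun i j => F (b i) x y (b j))
        + (3 : ℝ) • (fun i j => F (b i) x (b j) y) + (fun i j => F (b i) (b j) y x)
        + (fun i j => F (b i) y (b j) x) + (fun i j => F (b j) x y (b i))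
        + fun i j => F y x (b j) (b i)) := by
    funext i j; simp only [mu, Pi.smul_apply, Pi.add_apply, smul_eq_mul]; ring
  change contract n b g _ = _
  rw [hsplit, map_smul, map_add, map_add, map_add, map_add, map_add, map_smul, map_smul,
    contract_swap hgs (fun i j => F (b i) x y (b j)),
    contract_swap hgs (fun i j => F y x (b i) (b j)),
    contract₁₃_eq_neg_RicS hgs hA hB, contract₁₃_eq_neg_RicS hgs hA hB,
    contract₁₂_eq_zero hgs hA, contract₃₄_eq hA hB]
  simp only [symB, lamB, Pi.smul_apply, Pi.add_apply, Pi.sub_apply, smul_eq_mul, Ric,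
    contract_apply]
  ring

end CurvatureContractions

theorem Ric_al1 (hgb : IsBilin g) (hgs : ∀ x y, g x y = g y x)
    (hgnd : ∀ x : V, (∀ y : V, g x y = 0) → x = 0) (hn : n ≠ 1) (F : V → V → V → V → ℝ) :
    Ric n b g (al1 n b g F) = (tau n b g F / n) • g := by
  have hn' : (n : ℝ) - 1 ≠ 0 := sub_ne_zero.mpr (by exact_mod_cast hn)
  rw [al1, Ric_smul, Ric_wedge hgb hgs hgnd 0 hgb]
  funext x y
  simp only [Pi.smul_apply, Pi.sub_apply, smul_eq_mul]
  field_simp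
  ring

theorem Ric_al2 (hgb : IsBilin g) (hgs : ∀ x y, g x y = g y x)
    (hgnd : ∀ x : V, (∀ y : V, g x y = 0) → x = 0) (hn₀ : n ≠ 0) (hn₂ : n ≠ 2)
    {F : V → V → V → V → ℝ} (hF : IsMulti4 F) :
    Ric n b g (al2 n b g F) = (-tau n b g F / n) • g
      + (1 / 2 : ℝ) • symB (Ric n b g F + RicS n b g F) := by
  have hn₀' : (n : ℝ) ≠ 0 := by exact_mod_cast hn₀
  have hn₂' : (n : ℝ) - 2 ≠ 0 := sub_ne_zero.mpr (by exact_mod_cast hn₂)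
  rw [al2, Ric_add, Ric_smul, Ric_smul, Ric_wedge hgb hgs hgnd 0 hgb,
    Ric_wedge hgb hgs hgnd 1 (hF.isBilin_Ric.add hF.isBilin_RicS).symB, trg_symB hgs, trg_add,
    trg_Ric, trg_RicS]
  funext x y
  simp only [Pi.smul_apply, Pi.sub_apply, Pi.add_apply, smul_eq_mul]
  field_simp
  ring

theorem Ric_al3 (hgb : IsBilin g) (hgs : ∀ x y, g x y = g y x)
    (hgnd : ∀ x : V, (∀ y : V, g x y = 0) → x = 0) (hn : n ≠ 0)
    {F : V → V → V → V → ℝ} (hF : IsMulti4 F) :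
    Ric n b g (al3 n b g F) = (1 / 2 : ℝ) • symB (Ric n b g F - RicS n b g F) := by
  have hn' : (n : ℝ) ≠ 0 := by exact_mod_cast hn
  rw [al3, Ric_smul, Ric_wedge hgb hgs hgnd (-1) (hF.isBilin_Ric.sub hF.isBilin_RicS).symB,
    trg_symB hgs, trg_sub, trg_Ric, trg_RicS]
  funext x y
  simp only [Pi.smul_apply, Pi.sub_apply, smul_eq_mul]
  field_simp
  ring

theorem Ric_al4 (hgb : IsBilin g) (hgs : ∀ x y, g x y = g y x)
    (hgnd : ∀ x : V, (∀ y : V, g x y = 0) → x = 0)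
    {F : V → V → V → V → ℝ} (hF : IsMulti4 F) :
    Ric n b g (al4 n b g F) = (1 / 4 : ℝ) • lamB ((3 : ℝ) • Ric n b g F - RicS n b g F) := by
  have hL : IsBilin (lamB ((3 : ℝ) • Ric n b g F - RicS n b g F)) :=
    ((hF.isBilin_Ric.smul 3).sub hF.isBilin_RicS).lamB
  have hn' : (n : ℝ) + 2 ≠ 0 := by positivity
  rw [al4, Ric_smul, Ric_add, Ric_smul, Ric_prodB hgb hgs hgnd hL,
    Ric_wedge hgb hgs hgnd (-1) hL, trg_lamB hgs]
  funext x y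
  simp only [Pi.smul_apply, Pi.sub_apply, Pi.add_apply, smul_eq_mul, lamB]
  field_simp
  ring

theorem Ric_al5 (hgb : IsBilin g) (hgs : ∀ x y, g x y = g y x)
    (hgnd : ∀ x : V, (∀ y : V, g x y = 0) → x = 0) (hn : n ≠ 2)
    {F : V → V → V → V → ℝ} (hF : IsMulti4 F) :
    Ric n b g (al5 n b g F) = (1 / 4 : ℝ) • lamB (Ric n b g F + RicS n b g F) := by
  have hL : IsBilin (lamB (Ric n b g F + RicS n b g F)) :=
    (hF.isBilin_Ric.add hF.isBilin_RicS).lamB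
  have hn' : (n : ℝ) - 2 ≠ 0 := sub_ne_zero.mpr (by exact_mod_cast hn)
  rw [al5, Ric_smul, Ric_add, Ric_smul, Ric_prodB hgb hgs hgnd hL,
    Ric_wedge hgb hgs hgnd 3 hL, trg_lamB hgs]
  funext x y
  simp only [Pi.smul_apply, Pi.sub_apply, Pi.add_apply, smul_eq_mul, lamB]
  field_simp
  ring

theorem Ric_al6 (hgb : IsBilin g) (hgs : ∀ x y, g x y = g y x)
    (hgnd : ∀ x : V, (∀ y : V, g x y = 0) → x = 0) (hn₀ : n ≠ 0) (hn₁ : n ≠ 1) (hn₂ : n ≠ 2)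
    {F : V → V → V → V → ℝ} (hF : IsMulti4 F) : Ric n b g (al6 n b g F) = 0 := by
  rw [al6, Ric_sub, Ric_sub, Ric_psi hgs, Ric_al1 hgb hgs hgnd hn₁, Ric_al2 hgb hgs hgnd hn₀ hn₂ hF]
  funext x y
  simp only [Pi.sub_apply, Pi.add_apply, Pi.smul_apply, Pi.zero_apply, smul_eq_mul]
  ring

theorem Ric_al7 (hgb : IsBilin g) (hgs : ∀ x y, g x y = g y x)
    (hgnd : ∀ x : V, (∀ y : V, g x y = 0) → x = 0) (hn : n ≠ 0)
    {F : V → V → V → V → ℝ} (hF : F ∈ rSet V) : Ric n b g (al7 n b g F) = 0 := by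
  rw [al7, Ric_sub, Ric_sub, Ric_mu hgs hF.2.1 hF.2.2, Ric_al3 hgb hgs hgnd hn hF.1,
    Ric_al4 hgb hgs hgnd hF.1, add_sub_cancel_left, sub_self]

theorem Ric_al8 (hgb : IsBilin g) (hgs : ∀ x y, g x y = g y x)
    (hgnd : ∀ x : V, (∀ y : V, g x y = 0) → x = 0) (hn : n ≠ 2)
    {F : V → V → V → V → ℝ} (hF : F ∈ rSet V) : Ric n b g (al8 n b g F) = 0 := by
  rw [al8, Ric_sub, Ric_sub, Ric_sub, Ric_mu hgs hF.2.1 hF.2.2, Ric_psi hgs,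
    Ric_al5 hgb hgs hgnd hn hF.1]
  funext x y
  simp only [symB, lamB, Pi.sub_apply, Pi.add_apply, Pi.smul_apply, Pi.zero_apply, smul_eq_mul]
  ring

theorem trg_Ric_al2 (hgb : IsBilin g) (hgs : ∀ x y, g x y = g y x)
    (hgnd : ∀ x : V, (∀ y : V, g x y = 0) → x = 0) (hn₀ : n ≠ 0) (hn₂ : n ≠ 2)
    {F : V → V → V → V → ℝ} (hF : IsMulti4 F) : trg n b g (Ric n b g (al2 n b g F)) = 0 := by
  have hn₀' : (n : ℝ) ≠ 0 := by exact_mod_cast hn₀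
  rw [Ric_al2 hgb hgs hgnd hn₀ hn₂ hF, trg_add, trg_smul, trg_smul, trg_symB hgs, trg_add,
    trg_Ric, trg_RicS, trg_self hgb hgs hgnd]
  field_simp
  ring

theorem trg_Ric_al3 (hgb : IsBilin g) (hgs : ∀ x y, g x y = g y x)
    (hgnd : ∀ x : V, (∀ y : V, g x y = 0) → x = 0) (hn : n ≠ 0)
    {F : V → V → V → V → ℝ} (hF : IsMulti4 F) : trg n b g (Ric n b g (al3 n b g F)) = 0 := by
  rw [Ric_al3 hgb hgs hgnd hn hF, trg_smul, trg_symB hgs, trg_sub, trg_Ric, trg_RicS, sub_self,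
    mul_zero]

theorem trg_Ric_al4 (hgb : IsBilin g) (hgs : ∀ x y, g x y = g y x)
    (hgnd : ∀ x : V, (∀ y : V, g x y = 0) → x = 0)
    {F : V → V → V → V → ℝ} (hF : IsMulti4 F) : trg n b g (Ric n b g (al4 n b g F)) = 0 := by
  rw [Ric_al4 hgb hgs hgnd hF, trg_smul, trg_lamB hgs, mul_zero]

theorem trg_Ric_al5 (hgb : IsBilin g) (hgs : ∀ x y, g x y = g y x)
    (hgnd : ∀ x : V, (∀ y : V, g x y = 0) → x = 0) (hn : n ≠ 2)
    {F : V → V → V → V → ℝ} (hF : IsMulti4 F) : trg n b g (Ric n b g (al5 n b g F)) = 0 := by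
  rw [Ric_al5 hgb hgs hgnd hn hF, trg_smul, trg_lamB hgs, mul_zero]

theorem stmt12 {V : Type*} [AddCommGroup V] [Module ℝ V]
    (n : ℕ) (hn : 3 ≤ n) (b : Module.Basis (Fin n) ℝ V)
    (g : V → V → ℝ) (hgb : IsBilin g) (hgs : ∀ x y, g x y = g y x)
    (hgnd : ∀ x : V, (∀ y : V, g x y = 0) → x = 0) :
    ∀ F ∈ rSet V,
      Ric n b g (al1 n b g F) = ((tau n b g F) / (n : ℝ)) • g ∧
      Ric n b g (al2 n b g F) = (-(tau n b g F) / (n : ℝ)) • g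
          + ((1 : ℝ) / 2) • symB (Ric n b g F + RicS n b g F) ∧
      Ric n b g (al3 n b g F) = ((1 : ℝ) / 2) • symB (Ric n b g F - RicS n b g F) ∧
      Ric n b g (al4 n b g F) = ((1 : ℝ) / 4) • lamB ((3 : ℝ) • Ric n b g F - RicS n b g F) ∧
      Ric n b g (al5 n b g F) = ((1 : ℝ) / 4) • lamB (Ric n b g F + RicS n b g F) ∧
      Ric n b g (al6 n b g F) = 0 ∧ Ric n b g (al7 n b g F) = 0 ∧
      Ric n b g (al8 n b g F) = 0 ∧
      trg n b g (Ric n b g (al2 n b g F)) = 0 ∧ trg n b g (Ric n b g (al3 n b g F)) = 0 ∧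
      trg n b g (Ric n b g (al4 n b g F)) = 0 ∧ trg n b g (Ric n b g (al5 n b g F)) = 0 ∧
      trg n b g (Ric n b g (al6 n b g F)) = 0 ∧ trg n b g (Ric n b g (al7 n b g F)) = 0 ∧
      trg n b g (Ric n b g (al8 n b g F)) = 0 := by
  intro F hF
  have hn₀ : n ≠ 0 := by omega
  have hn₁ : n ≠ 1 := by omega
  have hn₂ : n ≠ 2 := by omega
  have h6 := Ric_al6 (b := b) hgb hgs hgnd hn₀ hn₁ hn₂ hF.1
  have h7 := Ric_al7 (b := b) hgb hgs hgnd hn₀ hF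
  have h8 := Ric_al8 (b := b) hgb hgs hgnd hn₂ hF
  exact ⟨Ric_al1 hgb hgs hgnd hn₁ F, Ric_al2 hgb hgs hgnd hn₀ hn₂ hF.1,
    Ric_al3 hgb hgs hgnd hn₀ hF.1, Ric_al4 hgb hgs hgnd hF.1, Ric_al5 hgb hgs hgnd hn₂ hF.1,
    h6, h7, h8, trg_Ric_al2 hgb hgs hgnd hn₀ hn₂ hF.1, trg_Ric_al3 hgb hgs hgnd hn₀ hF.1,
    trg_Ric_al4 hgb hgs hgnd hF.1, trg_Ric_al5 hgb hgs hgnd hn₂ hF.1,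
    h6 ▸ trg_zero, h7 ▸ trg_zero, h8 ▸ trg_zero⟩

end GCT
end

section
/- Let R ∈ 𝔣(V,g) be such that R* ∈ 𝔣(V,g) as well (i.e., R, R* ∈ 𝔯(V) and both Ric(R), Ric(R*) are symmetric). Then, with Ric := Ric(R), Ric* := Ric*(R), τ := τ(R): (1) α₁(R) = −(τ/(n(n−1))) g∧g; (2) α₂(R) = −(1/(2(n−2)))(Ric + Ric*)∧₁g + (2τ/(n(n−2))) g∧g; (3) α₃(R) = −(1/(2n))(Ric − Ric*)∧_{−1}g; (4) α₄(R) = 0 = α₅(R); (5) α₆(R) = (1/2)(R + R*) − α₁(R) − α₂(R); (6) α₇(R) = (1/2)(R − R*) − α₃(R); (7) α₈(R) = 0. -/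
open scoped BigOperators
open Pointwise

namespace GCT

variable {V : Type*} [AddCommGroup V] [Module ℝ V]

variable (n : ℕ) (b : Module.Basis (Fin n) ℝ V) (g : V → V → ℝ)

/-!
Symmetry of `Ric` and `Ric*` kills every antisymmetric part `Λ(·)`, hence `α₄` and `α₅`, and
makes every `S(·)` the identity. The first Bianchi identities of `R` and of `R*` together force
`R + R*` to be symmetric under the exchange of the two pairs of arguments, so
`ψ(R) = (R + R*)/2`; the Bianchi identity of `R*` alone turns `μ(R)` into `(R − R*)/2`.
Hence `α₈(R) = R − μ(R) − ψ(R) = 0`.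
-/

section Symmetric

variable {α : Type*} {h : α → α → ℝ}

theorem lamB_eq_zero (hh : ∀ x y, h x y = h y x) : lamB h = 0 := by
  funext x y
  simp [lamB, hh x y]

theorem symB_eq_self (hh : ∀ x y, h x y = h y x) : symB h = h := by
  funext x y
  simp [symB, hh x y]

theorem prodB_zero_left (k : α → α → ℝ) : prodB 0 k = 0 := by
  funext x y z w
  simp [prodB]

theorem wedge_zero_left (t : ℝ) (k : α → α → ℝ) : wedge t 0 k = 0 := by
  funext x y z w
  simp [wedge]

end Symmetric

section Conjugate

variable {F : V → V → V → V → ℝ}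

theorem add_conj_apply_swap_pairs (hF : F ∈ rSet V) (hFc : conj F ∈ rSet V) (x y z w : V) :
    (F + conj F) x y z w = (F + conj F) z w x y := by
  obtain ⟨-, hA, hB⟩ := hF
  have hC : ∀ a b c d : V, F a b d c + F b c d a + F c a d b = 0 := fun a b c d => by
    simpa only [conj, ← neg_add, neg_eq_zero] using hFc.2.2 a b c d
  simp only [Pi.add_apply, conj]
  linarith [hA x y z w, hC x y z w, hA x z w y, hB x z w y, hC x w y z, hA x w z y, hB y z w x]

theorem psi_eq_half_add_conj (hF : F ∈ rSet V) (hFc : conj F ∈ rSet V) :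
    psi F = (1 / 2 : ℝ) • (F + conj F) := by
  funext x y z w
  have hpair := add_conj_apply_swap_pairs hF hFc x y z w
  simp only [psi, Pi.smul_apply, Pi.add_apply, smul_eq_mul, conj] at hpair ⊢
  linarith [hF.2.1 y x w z, hF.2.1 w z y x]

theorem mu_eq_half_sub_conj (hFc : conj F ∈ rSet V) : mu F = (1 / 2 : ℝ) • (F - conj F) := by
  obtain ⟨-, hA, hC⟩ := hFc
  funext x y z w
  simp only [conj] at hA hC
  simp only [mu, Pi.smul_apply, Pi.sub_apply, smul_eq_mul, conj]
  linarith [hA x y w z, hA x y z w, hC x z y w, hC x w y z]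

theorem RicS_eq_Ric_conj (hA : ∀ x y z w, F x y z w = -F y x z w) :
    RicS n b g F = Ric n b g (conj F) := by
  funext x y
  simp only [RicS, Ric, conj, hA x]

end Conjugate

theorem stmt16_general {V : Type*} [AddCommGroup V] [Module ℝ V]
    (n : ℕ) (b : Module.Basis (Fin n) ℝ V)
    (g : V → V → ℝ) :
    ∀ F ∈ rSet V, conj F ∈ rSet V →
      (∀ x y, Ric n b g F x y = Ric n b g F y x) →
      (∀ x y, Ric n b g (conj F) x y = Ric n b g (conj F) y x) →
      al1 n b g F = (-(tau n b g F) / ((n : ℝ) * ((n : ℝ) - 1))) • wedge 0 g g ∧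
      al2 n b g F =
        ((-1 : ℝ) / (2 * ((n : ℝ) - 2))) • wedge 1 (Ric n b g F + RicS n b g F) g
          + ((2 * tau n b g F) / ((n : ℝ) * ((n : ℝ) - 2))) • wedge 0 g g ∧
      al3 n b g F = ((-1 : ℝ) / (2 * (n : ℝ))) • wedge (-1) (Ric n b g F - RicS n b g F) g ∧
      (al4 n b g F = 0 ∧ al5 n b g F = 0) ∧
      al6 n b g F = ((1 : ℝ) / 2) • (F + conj F) - al1 n b g F - al2 n b g F ∧
      al7 n b g F = ((1 : ℝ) / 2) • (F - conj F) - al3 n b g F ∧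
      al8 n b g F = 0 := by
  intro F hF hFc hRic hRicC
  have hRicS : ∀ x y, RicS n b g F x y = RicS n b g F y x := by
    rw [RicS_eq_Ric_conj n b g hF.2.1]
    exact hRicC
  have h4 : al4 n b g F = 0 := by
    rw [al4, lamB_eq_zero fun x y => by
      simp only [Pi.sub_apply, Pi.smul_apply, hRic x y, hRicS x y]]
    simp only [prodB_zero_left, wedge_zero_left, smul_zero, add_zero]
  have h5 : al5 n b g F = 0 := by
    rw [al5, lamB_eq_zero fun x y => by simp only [Pi.add_apply, hRic x y, hRicS x y]]
    simp only [prodB_zero_left, wedge_zero_left, smul_zero, add_zero]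
  refine ⟨rfl, ?_, ?_, ⟨h4, h5⟩, ?_, ?_, ?_⟩
  · rw [al2, symB_eq_self fun x y => by simp only [Pi.add_apply, hRic x y, hRicS x y]]
  · rw [al3, symB_eq_self fun x y => by simp only [Pi.sub_apply, hRic x y, hRicS x y]]
  · rw [al6, psi_eq_half_add_conj hF hFc]
  · rw [al7, mu_eq_half_sub_conj hFc, h4, sub_zero]
  · rw [al8, mu_eq_half_sub_conj hFc, psi_eq_half_add_conj hF hFc, h5]
    module

theorem stmt16 {V : Type*} [AddCommGroup V] [Module ℝ V]
    (n : ℕ) (hn : 3 ≤ n) (b : Module.Basis (Fin n) ℝ V)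
    (g : V → V → ℝ) (hgb : IsBilin g) (hgs : ∀ x y, g x y = g y x)
    (hgnd : ∀ x : V, (∀ y : V, g x y = 0) → x = 0) :
    ∀ F ∈ rSet V, conj F ∈ rSet V →
      (∀ x y, Ric n b g F x y = Ric n b g F y x) →
      (∀ x y, Ric n b g (conj F) x y = Ric n b g (conj F) y x) →
      al1 n b g F = (-(tau n b g F) / ((n : ℝ) * ((n : ℝ) - 1))) • wedge 0 g g ∧
      al2 n b g F =
        ((-1 : ℝ) / (2 * ((n : ℝ) - 2))) • wedge 1 (Ric n b g F + RicS n b g F) g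
          + ((2 * tau n b g F) / ((n : ℝ) * ((n : ℝ) - 2))) • wedge 0 g g ∧
      al3 n b g F = ((-1 : ℝ) / (2 * (n : ℝ))) • wedge (-1) (Ric n b g F - RicS n b g F) g ∧
      (al4 n b g F = 0 ∧ al5 n b g F = 0) ∧
      al6 n b g F = ((1 : ℝ) / 2) • (F + conj F) - al1 n b g F - al2 n b g F ∧
      al7 n b g F = ((1 : ℝ) / 2) • (F - conj F) - al3 n b g F ∧
      al8 n b g F = 0 :=
  stmt16_general n b g

end GCT
end
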